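/- With the condition c₀/c₁ > ρ⁻² − 1 and r = √(c₀ρ²/(c₁(1−ρ²))), the optimal bi-fidelity MFMC variance at the continuous-relaxation optimum (n₀*, n₁*) = (C/(c₀+c₁r), r·C/(c₀+c₁r)) equals (1/C)·(√(c₀(1−ρ²)) + √(c₁ρ²))², i.e., v(n₀*, n₁*) = (√(c₀(1−ρ²)) + √(c₁)·|ρ|)²/C. -/

import Mathlib

open Real

/-! Put `p = √(c₀(1−ρ²))` and `q = √(c₁ρ²)`. Then `r = p q / (c₁(1−ρ²))`, so
`c₀ + c₁ r = p (p + q) / (1−ρ²)` and `(1−ρ²) + ρ²/r = (1−ρ²)(p + q) / p`. Since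
`1/n₀ = (c₀ + c₁ r)/C`, the variance `((1−ρ²) + ρ²/r)/n₀` is their product `(p + q)²` over `C`. -/

noncomputable def mfmcVariance (ρ n₀ n₁ : ℝ) : ℝ := (1 - ρ ^ 2) / n₀ + ρ ^ 2 / n₁

theorem mfmcVariance_eq (ρ n₀ n₁ : ℝ) :
    mfmcVariance ρ n₀ n₁ = 1 / n₀ - (1 / n₀ - 1 / n₁) * ρ ^ 2 := by
  unfold mfmcVariance
  ring

theorem mfmcVariance_mul_right (ρ n₀ r : ℝ) :
    mfmcVariance ρ n₀ (n₀ * r) = ((1 - ρ ^ 2) + ρ ^ 2 / r) / n₀ := by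
  rw [mfmcVariance, div_mul_eq_div_div_swap, add_div]

/-- `√(c₀τ/(c₁σ))` is the minimiser over `r > 0` of `(c₀ + c₁ r)(σ + τ/r)`: the equality case
of Cauchy–Schwarz. -/
theorem add_mul_sqrt_mul_add_div_sqrt {c₀ c₁ σ τ : ℝ} (hc₀ : 0 < c₀) (hc₁ : 0 < c₁)
    (hσ : 0 < σ) (hτ : 0 < τ) :
    (c₀ + c₁ * √(c₀ * τ / (c₁ * σ))) * (σ + τ / √(c₀ * τ / (c₁ * σ)))
      = (√(c₀ * σ) + √(c₁ * τ)) ^ 2 := by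
  have hp : 0 < √(c₀ * σ) := by positivity
  have hq : 0 < √(c₁ * τ) := by positivity
  have hp2 : √(c₀ * σ) ^ 2 = c₀ * σ := sq_sqrt (by positivity)
  have hq2 : √(c₁ * τ) ^ 2 = c₁ * τ := sq_sqrt (by positivity)
  have hr : √(c₀ * τ / (c₁ * σ)) = √(c₀ * σ) * √(c₁ * τ) / (c₁ * σ) := by
    rw [sqrt_eq_iff_mul_self_eq_of_pos (by positivity)]
    field_simp
    rw [hp2, hq2]
    ring
  rw [hr]
  field_simp
  linear_combination
    -(√(c₀ * σ) * √(c₁ * τ) + c₁ * τ) * hp2 - (√(c₀ * σ) ^ 2 + √(c₀ * σ) * √(c₁ * τ)) * hq2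

theorem stmt_3_general (ρ c₀ c₁ C : ℝ) (hρ : 0 < ρ ∧ ρ < 1) (hc₁ : 0 < c₁) (hc : c₁ < c₀)
    (r n₀s n₁s : ℝ)
    (hr : r = Real.sqrt (c₀ * ρ ^ 2 / (c₁ * (1 - ρ ^ 2))))
    (hn₀ : n₀s = C / (c₀ + c₁ * r)) (hn₁ : n₁s = n₀s * r) :
    1 / n₀s - (1 / n₀s - 1 / n₁s) * ρ ^ 2
      = (Real.sqrt (c₀ * (1 - ρ ^ 2)) + Real.sqrt c₁ * |ρ|) ^ 2 / C := by
  obtain ⟨hρ0, hρ1⟩ := hρ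
  have hσ : 0 < 1 - ρ ^ 2 := by nlinarith
  rw [← mfmcVariance_eq, hn₁, mfmcVariance_mul_right, hn₀, div_div_eq_mul_div, mul_comm, hr,
    add_mul_sqrt_mul_add_div_sqrt (hc₁.trans hc) hc₁ hσ (by positivity), sqrt_mul hc₁.le,
    sqrt_sq_eq_abs]

/-- With the condition `c₀/c₁ > ρ⁻² − 1` and `r = √(c₀ρ²/(c₁(1−ρ²)))`,
the optimal bi-fidelity MFMC variance at the continuous-relaxation optimum
`(n₀*, n₁*) = (C/(c₀+c₁r), r·C/(c₀+c₁r))` equals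
`(√(c₀(1−ρ²)) + √(c₁)·|ρ|)² / C`. -/
theorem stmt_3 (ρ c₀ c₁ C : ℝ) (hρ : 0 < ρ ∧ ρ < 1) (hc₁ : 0 < c₁) (hc : c₁ < c₀)
    (hC : 0 < C) (hcond : c₀ / c₁ > ρ⁻¹ ^ 2 - 1)
    (r n₀s n₁s : ℝ)
    (hr : r = Real.sqrt (c₀ * ρ ^ 2 / (c₁ * (1 - ρ ^ 2))))
    (hn₀ : n₀s = C / (c₀ + c₁ * r)) (hn₁ : n₁s = n₀s * r) :
    1 / n₀s - (1 / n₀s - 1 / n₁s) * ρ ^ 2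
      = (Real.sqrt (c₀ * (1 - ρ ^ 2)) + Real.sqrt c₁ * |ρ|) ^ 2 / C :=
  stmt_3_general ρ c₀ c₁ C hρ hc₁ hc r n₀s n₁s hr hn₀ hn₁
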